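/- arXiv:2506.17463 — 4 statements merged into one kernel-verified Lean document; each statement's English description precedes it below -/
import Mathlib

section
/- Let A, B be p×p symmetric positive definite real matrices, and let A^{1/2}, B^{1/2} denote their (unique) symmetric positive definite square roots. Then ‖A^{1/2} − B^{1/2}‖₂ ≤ ‖A − B‖₂ / (√λ_p(A) + √λ_p(B)), where λ_p denotes the smallest eigenvalue and ‖·‖₂ the spectral norm. -/
/-!
Write `S = A^{1/2}`, `T = B^{1/2}` and take a unit eigenvector `x` of the symmetric matrix `S - T`
whose eigenvalue `η` has maximal modulus, so that `‖S - T‖ = |η|`. Since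
`A - B = S (S - T) + (S - T) T`, the quadratic form gives
`xᵀ (A - B) x = η (xᵀ S x + xᵀ T x)`, and `xᵀ S x ≥ √λ_min(A)` because the spectrum of `S` is the
square root of that of `A`. Hence `‖S - T‖ (√λ_min(A) + √λ_min(B)) ≤ |xᵀ (A - B) x| ≤ ‖A - B‖`.
-/

open Matrix
open scoped Matrix.Norms.L2Operator

section PosSemidefSqrt

open scoped ComplexOrder

/-- The positive semidefinite square root of a positive semidefinite matrix
(as `Matrix.PosSemidef.sqrt` was defined in Mathlib, now removed). -/
noncomputable def Matrix.PosSemidef.sqrt {n 𝕜 : Type*} [Fintype n] [RCLike 𝕜] [DecidableEq n]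
    {A : Matrix n n 𝕜} (hA : A.PosSemidef) : Matrix n n 𝕜 :=
  hA.1.eigenvectorUnitary.1 * diagonal ((↑) ∘ (√·) ∘ hA.1.eigenvalues) *
    (star hA.1.eigenvectorUnitary : Matrix n n 𝕜)

end PosSemidefSqrt

open scoped ComplexOrder MatrixOrder

namespace Matrix

section CommRing

variable {n R : Type*} [Fintype n] [CommRing R]

lemma dotProduct_mul_self_sub_mul_self_mulVec {S T : Matrix n n R} (hST : (S - T).IsSymm)
    {x : n → R} {η : R} (hx : (S - T) *ᵥ x = η • x) :
    x ⬝ᵥ (S * S - T * T) *ᵥ x = η * (x ⬝ᵥ S *ᵥ x + x ⬝ᵥ T *ᵥ x) := by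
  have hxST : x ᵥ* (S - T) = η • x := by rw [← hST.eq, vecMul_transpose, hx]
  have hsplit : S * S - T * T = S * (S - T) + (S - T) * T := by noncomm_ring
  rw [hsplit, add_mulVec, dotProduct_add, ← mulVec_mulVec, ← mulVec_mulVec, hx,
    dotProduct_mulVec x (S - T), hxST, mulVec_smul, dotProduct_smul, smul_dotProduct,
    smul_eq_mul, smul_eq_mul, mul_add]

end CommRing

section RCLike

variable {n 𝕜 : Type*} [Fintype n] [DecidableEq n] [RCLike 𝕜] {A : Matrix n n 𝕜}

lemma PosSemidef.sqrt_eq_cfcSqrt (hA : A.PosSemidef) : hA.sqrt = CFC.sqrt A := by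
  rw [CFC.sqrt_eq_real_sqrt A hA.nonneg, cfcₙ_eq_cfc, hA.1.cfc_eq]
  rfl

lemma PosSemidef.isHermitian_sqrt (hA : A.PosSemidef) : hA.sqrt.IsHermitian :=
  hA.sqrt_eq_cfcSqrt ▸ (CFC.sqrt_nonneg A).posSemidef.1

lemma PosSemidef.sqrt_mul_self (hA : A.PosSemidef) : hA.sqrt * hA.sqrt = A := by
  rw [hA.sqrt_eq_cfcSqrt, CFC.sqrt_mul_sqrt_self A hA.nonneg]

lemma IsHermitian.l2_opNorm_eq_norm_eigenvalues (hA : A.IsHermitian) :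
    ‖A‖ = ‖hA.eigenvalues‖ := by
  conv_lhs => rw [hA.spectral_theorem]
  rw [Unitary.conjStarAlgAut_apply, ← Unitary.coe_star, CStarRing.norm_mul_coe_unitary,
    CStarRing.norm_coe_unitary_mul, l2_opNorm_diagonal]
  simp [Pi.norm_def]

lemma IsHermitian.exists_eigenvector_l2_opNorm_eq [Nonempty n] (hA : A.IsHermitian) :
    ∃ (x : EuclideanSpace 𝕜 n) (η : ℝ), ‖x‖ = 1 ∧ A *ᵥ x = η • ⇑x ∧ ‖A‖ = |η| := by
  obtain ⟨j, hj⟩ := Finite.exists_max fun i ↦ |hA.eigenvalues i|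
  refine ⟨hA.eigenvectorBasis j, hA.eigenvalues j, hA.eigenvectorBasis.orthonormal.1 j,
    hA.mulVec_eigenvectorBasis j, ?_⟩
  rw [hA.l2_opNorm_eq_norm_eigenvalues]
  exact le_antisymm ((pi_norm_le_iff_of_nonneg (abs_nonneg _)).2 hj)
    (norm_le_pi_norm hA.eigenvalues j)

lemma IsHermitian.iInf_eigenvalues_le_of_mem_spectrum (hA : A.IsHermitian) {μ : ℝ}
    (hμ : μ ∈ spectrum ℝ A) : ⨅ i, hA.eigenvalues i ≤ μ := by
  rw [hA.spectrum_real_eq_range_eigenvalues] at hμ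
  obtain ⟨i, rfl⟩ := hμ
  exact ciInf_le (Set.finite_range _).bddBelow i

lemma PosSemidef.sqrt_iInf_eigenvalues_le_of_mem_spectrum_sqrt (hA : A.PosSemidef) {μ : ℝ}
    (hμ : μ ∈ spectrum ℝ hA.sqrt) : √(⨅ i, hA.1.eigenvalues i) ≤ μ := by
  rw [hA.sqrt_eq_cfcSqrt, CFC.sqrt_eq_real_sqrt A hA.nonneg, cfcₙ_eq_cfc,
    cfc_map_spectrum Real.sqrt A hA.1.isSelfAdjoint] at hμ
  obtain ⟨ν, hν, rfl⟩ := hμ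
  exact Real.sqrt_le_sqrt (hA.1.iInf_eigenvalues_le_of_mem_spectrum hν)

lemma PosDef.iInf_eigenvalues_pos [Nonempty n] (hA : A.PosDef) :
    0 < ⨅ i, hA.1.eigenvalues i := by
  obtain ⟨i, hi⟩ := exists_eq_ciInf_of_finite (f := hA.1.eigenvalues)
  exact hi ▸ hA.eigenvalues_pos i

end RCLike

section Real

variable {n : Type*} [Fintype n] [DecidableEq n]

lemma abs_dotProduct_mulVec_le (M : Matrix n n ℝ) (x : EuclideanSpace ℝ n) :
    |x ⬝ᵥ M *ᵥ x| ≤ ‖M‖ * ‖x‖ ^ 2 :=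
  calc |x ⬝ᵥ M *ᵥ x| ≤ ‖x‖ * ‖(EuclideanSpace.equiv n ℝ).symm (M *ᵥ x)‖ := by
        simpa [EuclideanSpace.inner_eq_star_dotProduct, dotProduct_comm]
          using abs_real_inner_le_norm x ((EuclideanSpace.equiv n ℝ).symm (M *ᵥ x))
    _ ≤ ‖x‖ * (‖M‖ * ‖x‖) := by gcongr; exact l2_opNorm_mulVec M x
    _ = ‖M‖ * ‖x‖ ^ 2 := by ring

lemma mul_norm_sq_le_dotProduct_mulVec {M : Matrix n n ℝ} (hM : M.IsHermitian) {r : ℝ}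
    (h : ∀ μ ∈ spectrum ℝ M, r ≤ μ) (x : EuclideanSpace ℝ n) :
    r * ‖x‖ ^ 2 ≤ x ⬝ᵥ M *ᵥ x := by
  have hle : (M - algebraMap ℝ _ r).PosSemidef :=
    (algebraMap_le_iff_le_spectrum hM.isSelfAdjoint).2 h
  have hx : x ⬝ᵥ x = ‖x‖ ^ 2 := by
    rw [← real_inner_self_eq_norm_sq, EuclideanSpace.inner_eq_star_dotProduct, star_trivial]
  have := hle.dotProduct_mulVec_nonneg x
  rwa [star_trivial, Algebra.algebraMap_eq_smul_one, sub_mulVec, smul_mulVec, one_mulVec,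
    dotProduct_sub, dotProduct_smul, hx, smul_eq_mul, sub_nonneg] at this

lemma PosSemidef.sqrt_iInf_eigenvalues_le_dotProduct_sqrt_mulVec {A : Matrix n n ℝ}
    (hA : A.PosSemidef) {x : EuclideanSpace ℝ n} (hx : ‖x‖ = 1) :
    √(⨅ i, hA.1.eigenvalues i) ≤ x ⬝ᵥ hA.sqrt *ᵥ x := by
  simpa [hx] using mul_norm_sq_le_dotProduct_mulVec hA.isHermitian_sqrt
    (fun _ ↦ hA.sqrt_iInf_eigenvalues_le_of_mem_spectrum_sqrt) x

end Real

end Matrix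

/-- for symmetric positive definite `A, B` with symmetric positive
definite square roots `A^{1/2}, B^{1/2}`, one has
`‖A^{1/2} − B^{1/2}‖₂ ≤ ‖A − B‖₂ / (√λ_min(A) + √λ_min(B))`, where `‖·‖₂` is the
spectral (ℓ²-operator) norm and `λ_min` the smallest eigenvalue. -/
theorem opNorm_sqrt_sub_sqrt_le
    (p : ℕ) (hp : 0 < p)
    (A B : Matrix (Fin p) (Fin p) ℝ)
    (hA : A.PosDef) (hB : B.PosDef) :
    ‖hA.posSemidef.sqrt - hB.posSemidef.sqrt‖ ≤
      ‖A - B‖ /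
        (Real.sqrt (⨅ i, hA.1.eigenvalues i) + Real.sqrt (⨅ i, hB.1.eigenvalues i)) := by
  have : Nonempty (Fin p) := ⟨⟨0, hp⟩⟩
  set S := hA.posSemidef.sqrt
  set T := hB.posSemidef.sqrt
  have hST : (S - T).IsHermitian :=
    hA.posSemidef.isHermitian_sqrt.sub hB.posSemidef.isHermitian_sqrt
  obtain ⟨x, η, hx, hSTx, hnorm⟩ := hST.exists_eigenvector_l2_opNorm_eq
  have hSx := hA.posSemidef.sqrt_iInf_eigenvalues_le_dotProduct_sqrt_mulVec hx
  have hTx := hB.posSemidef.sqrt_iInf_eigenvalues_le_dotProduct_sqrt_mulVec hx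
  have hpos : 0 < √(⨅ i, hA.1.eigenvalues i) + √(⨅ i, hB.1.eigenvalues i) := by
    have := hA.iInf_eigenvalues_pos
    have := hB.iInf_eigenvalues_pos
    positivity
  have hAB : A - B = S * S - T * T := by
    rw [hA.posSemidef.sqrt_mul_self, hB.posSemidef.sqrt_mul_self]
  rw [le_div_iff₀ hpos, hnorm]
  calc |η| * (√(⨅ i, hA.1.eigenvalues i) + √(⨅ i, hB.1.eigenvalues i))
      ≤ |η| * (x ⬝ᵥ S *ᵥ x + x ⬝ᵥ T *ᵥ x) := by gcongr
    _ = |x ⬝ᵥ (A - B) *ᵥ x| := by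
      rw [hAB, dotProduct_mul_self_sub_mul_self_mulVec (isHermitian_iff_isSymm.1 hST) hSTx,
        abs_mul,
        abs_of_pos (hpos.trans_le (add_le_add hSx hTx))]
    _ ≤ ‖A - B‖ := by simpa [hx] using abs_dotProduct_mulVec_le (A - B) x
end

section
/- Let p₁ = p₂·r and let C = (1−λ)·AAᵀ + λ·I_p with λ ∈ (0,1), p = p₁p₂, where A = [vec(A₁),...,vec(A_r)] with [A₁,...,A_r] = √p₂·O for an orthogonal O ∈ O(p₁) partitioned into r blocks of p₂ columns. Let R be the rearrangement operator and E = R(I_p)R(I_p)ᵀ/p₁. Then R(C)R(C)ᵀ = (1−λ)²·p·I_{p₂²} + (p₁λ² + 2λ(1−λ)p₁)·E. Consequently the singular values of R(C) are σ₁ = √p and σ₂ = ... = σ_{p₂²} = (1−λ)√p. -/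
open Matrix

/-- The rearrangement operator (matrices of size `p₁p₂ × p₁p₂` indexed by
`Fin p₂ × Fin p₁`): the row of `R M` indexed by `(j, i)` is the column-major
vectorization of the block `M_{[i,j]}`. -/
def rearrange {p₁ p₂ : ℕ} (M : Matrix (Fin p₂ × Fin p₁) (Fin p₂ × Fin p₁) ℝ) :
    Matrix (Fin p₂ × Fin p₂) (Fin p₁ × Fin p₁) ℝ :=
  Matrix.of fun ji ba => M (ji.2, ba.2) (ji.1, ba.1)

open Kronecker

/-- with `p₁ = p₂ r`, `C = (1−λ) AAᵀ + λ I_p` built from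
`A = [vec(√p₂ O₁),…,vec(√p₂ O_r)]` for an orthogonal `O = [O₁,…,O_r]`, and
`E = R(I_p)R(I_p)ᵀ/p₁`, one has
`R(C)R(C)ᵀ = (1−λ)² p I + (p₁λ² + 2λ(1−λ)p₁) E`. -/
theorem rearrange_core_gram
    (p₂ r : ℕ) (hp₂ : 0 < p₂) (hr : 0 < r) (p₁ : ℕ) (hp₁ : p₁ = p₂ * r)
    (lam : ℝ) (hlam0 : 0 < lam) (hlam1 : lam < 1)
    (O : Matrix (Fin p₁) (Fin r × Fin p₂) ℝ)
    (hO₁ : O * Oᵀ = 1) (hO₂ : Oᵀ * O = 1)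
    (A : Matrix (Fin p₂ × Fin p₁) (Fin r) ℝ)
    (hA : ∀ (x : Fin p₂ × Fin p₁) (i : Fin r), A x i = Real.sqrt p₂ * O x.2 (i, x.1))
    (C : Matrix (Fin p₂ × Fin p₁) (Fin p₂ × Fin p₁) ℝ)
    (hC : C = (1 - lam) • (A * Aᵀ) + lam • 1)
    (E : Matrix (Fin p₂ × Fin p₂) (Fin p₂ × Fin p₂) ℝ)
    (hE : E = (p₁ : ℝ)⁻¹ • (rearrange (1 : Matrix (Fin p₂ × Fin p₁) (Fin p₂ × Fin p₁) ℝ) *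
      (rearrange (1 : Matrix (Fin p₂ × Fin p₁) (Fin p₂ × Fin p₁) ℝ))ᵀ)) :
    rearrange C * (rearrange C)ᵀ =
      ((1 - lam) ^ 2 * (p₁ * p₂ : ℕ)) • (1 : Matrix (Fin p₂ × Fin p₂) (Fin p₂ × Fin p₂) ℝ) +
        ((p₁ : ℝ) * lam ^ 2 + 2 * lam * (1 - lam) * p₁) • E := by
  have hp₁pos : 0 < p₁ := by rw [hp₁]; exact Nat.mul_pos hp₂ hr
  have hp₁ne : (p₁ : ℝ) ≠ 0 := Nat.cast_ne_zero.mpr hp₁pos.ne'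
  -- orthonormal columns of O
  have hcol : ∀ x y : Fin r × Fin p₂, (∑ c, O c x * O c y) = if x = y then (1:ℝ) else 0 := by
    intro x y
    have := congrFun (congrFun hO₂ x) y
    simpa [Matrix.mul_apply, Matrix.one_apply] using this
  set RG := rearrange (A * Aᵀ) with hRGdef
  set RI := rearrange (1 : Matrix (Fin p₂ × Fin p₁) (Fin p₂ × Fin p₁) ℝ) with hRIdef
  -- the blocks of Oᵀ
  set B : Fin r → Matrix (Fin p₂) (Fin p₁) ℝ :=
    fun k => Matrix.of (fun a c => O c (k, a)) with hBdef
  have hBB : ∀ k k', B k * (B k')ᵀ =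
      if k = k' then (1 : Matrix (Fin p₂) (Fin p₂) ℝ) else 0 := by
    intro k k'
    ext a a'
    have h := hcol (k, a) (k', a')
    simp only [Prod.mk.injEq] at h
    simp only [Matrix.mul_apply, hBdef, Matrix.of_apply, Matrix.transpose_apply]
    rw [h]
    by_cases hk : k = k' <;> simp [hk, Matrix.one_apply]
  have hRG : RG = ∑ k, ((p₂:ℝ) • (B k ⊗ₖ B k)) := by
    ext ⟨a, b⟩ ⟨c, d⟩
    simp only [hRGdef, rearrange, Matrix.of_apply, Matrix.mul_apply, Matrix.transpose_apply,
      Matrix.sum_apply, Matrix.smul_apply, kroneckerMap_apply, hBdef, smul_eq_mul, hA]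
    refine Finset.sum_congr rfl fun k _ => ?_
    have hs : Real.sqrt p₂ * Real.sqrt p₂ = (p₂ : ℝ) :=
      Real.mul_self_sqrt (by positivity)
    linear_combination O d (k, b) * O c (k, a) * hs
  have hRGgram : RG * RGᵀ = (((p₁ * p₂ : ℕ) : ℝ)) • 1 := by
    rw [hRG, Matrix.transpose_sum]
    rw [Matrix.sum_mul]
    have : ∀ k : Fin r, ((p₂:ℝ) • (B k ⊗ₖ B k)) * (∑ k', ((p₂:ℝ) • (B k' ⊗ₖ B k'))ᵀ) =
        ((p₂:ℝ)^2) • 1 := by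
      intro k
      rw [Matrix.mul_sum]
      have : ∀ k' : Fin r, ((p₂:ℝ) • (B k ⊗ₖ B k)) * ((p₂:ℝ) • (B k' ⊗ₖ B k'))ᵀ =
          if k' = k then ((p₂:ℝ)^2) • 1 else 0 := by
        intro k'
        rw [Matrix.transpose_smul, ← kroneckerMap_transpose, Matrix.smul_mul,
          Matrix.mul_smul, smul_smul, ← Matrix.mul_kronecker_mul, hBB]
        by_cases hk : k = k'
        · subst hk; simp [Matrix.one_kronecker_one, pow_two]
        · simp [hk, Ne.symm hk]
      rw [Finset.sum_congr rfl fun k' _ => this k']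
      simp
    rw [Finset.sum_congr rfl fun k _ => this k, Finset.sum_const, Finset.card_univ,
      Fintype.card_fin, ← Nat.cast_smul_eq_nsmul ℝ, smul_smul]
    congr 1
    push_cast [hp₁]
    ring
  -- the rank-one matrix E₀
  set E₀ : Matrix (Fin p₂ × Fin p₂) (Fin p₂ × Fin p₂) ℝ :=
    Matrix.of (fun x y => if x.1 = x.2 then (if y.1 = y.2 then 1 else 0) else 0) with hE₀def
  have hE₀symm : E₀ᵀ = E₀ := by
    ext ⟨a, b⟩ ⟨c, d⟩
    simp only [hE₀def, Matrix.transpose_apply, Matrix.of_apply]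
    by_cases h1 : a = b <;> by_cases h2 : c = d <;> simp [h1, h2]
  have hRIgram : RI * RIᵀ = (p₁ : ℝ) • E₀ := by
    ext ⟨a, b⟩ ⟨a', b'⟩
    simp only [hRIdef, rearrange, Matrix.mul_apply, Matrix.transpose_apply, Matrix.of_apply,
      Matrix.one_apply, Prod.mk.injEq, Matrix.smul_apply, hE₀def, smul_eq_mul,
      Fintype.sum_prod_type, ite_and]
    by_cases h1 : a = b <;> by_cases h2 : a' = b' <;>
      simp [h1, h2, eq_comm, Finset.card_univ]
  have hEE₀ : E = E₀ := by
    rw [hE, hRIgram, smul_smul, inv_mul_cancel₀ hp₁ne, one_smul]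
  have hcross : RG * RIᵀ = (p₁ : ℝ) • E₀ := by
    rw [hRG, Matrix.sum_mul]
    have : ∀ k : Fin r, ((p₂:ℝ) • (B k ⊗ₖ B k)) * RIᵀ = (p₂:ℝ) • E₀ := by
      intro k
      rw [Matrix.smul_mul]
      congr 1
      ext ⟨a, b⟩ ⟨a', b'⟩
      simp only [Matrix.mul_apply, Matrix.transpose_apply, kroneckerMap_apply, hBdef,
        Matrix.of_apply, hRIdef, rearrange, Matrix.one_apply, Prod.mk.injEq, hE₀def,
        Fintype.sum_prod_type, ite_and]
      by_cases h2 : b' = a'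
      · simp only [h2, if_true, mul_ite, mul_one, mul_zero]
        rw [Finset.sum_congr rfl fun c (_ : c ∈ Finset.univ) => Finset.sum_ite_eq'
          (Finset.univ : Finset (Fin p₁)) c (fun d => O c (k, a) * O d (k, b))]
        simp only [Finset.mem_univ, if_true]
        have := hcol (k, a) (k, b)
        rw [this]
        by_cases h1 : a = b <;> simp [h1, Prod.ext_iff]
      · have h2' : ¬ a' = b' := fun h => h2 h.symm
        simp [h2, h2']
    rw [Finset.sum_congr rfl fun k _ => this k, Finset.sum_const, Finset.card_univ,
      Fintype.card_fin, ← Nat.cast_smul_eq_nsmul ℝ, smul_smul]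
    congr 1
    push_cast [hp₁]
    ring
  have hcross' : RI * RGᵀ = (p₁ : ℝ) • E₀ := by
    calc RI * RGᵀ = (RG * RIᵀ)ᵀ := by rw [Matrix.transpose_mul, Matrix.transpose_transpose]
    _ = ((p₁ : ℝ) • E₀)ᵀ := by rw [hcross]
    _ = (p₁ : ℝ) • E₀ := by rw [Matrix.transpose_smul, hE₀symm]
  have hRC : rearrange C = (1 - lam) • RG + lam • RI := by
    subst hC
    ext ⟨a, b⟩ ⟨c, d⟩
    simp [rearrange, hRGdef, hRIdef, Matrix.add_apply, Matrix.smul_apply]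
  rw [hRC, hEE₀]
  simp only [Matrix.transpose_add, Matrix.transpose_smul, Matrix.add_mul, Matrix.mul_add,
    Matrix.smul_mul, Matrix.mul_smul, hRGgram, hRIgram, hcross, hcross']
  module
end

section
/- Let k, m be positive integers, p₁ = (k+1)m, p₂ = km. Let U = [U₁,...,U_{k+1}] ∈ O(p₁) be partitioned into k+1 blocks of m columns, V ∈ O(p₂), O₁,...,O_k ∈ O(m). Define D₁ = ⊕_{i=1}^{k} √(k+1−i)·I_m, D₂ = ⊕_{i=1}^{k} √i·Oᵢ, and set A₁ = √m·[U₁,...,U_k]·D₁·Vᵀ, A₂ = √m·[U₂,...,U_{k+1}]·D₂·Vᵀ. Then A₁A₁ᵀ + A₂A₂ᵀ = p₂·I_{p₁} and A₁ᵀA₁ + A₂ᵀA₂ = p₁·I_{p₂}, and moreover tr(A₁ᵀA₂) = 0. -/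
set_option maxRecDepth 4000


open Matrix

/-- with `p₁ = (k+1)m`, `p₂ = km`, an orthogonal
`U = [U₁,…,U_{k+1}]` (blocks of `m` columns), orthogonal `V ∈ O(p₂)` and
`O₁,…,O_k ∈ O(m)`, the matrices `A₁ = √m [U₁,…,U_k] D₁ Vᵀ` and
`A₂ = √m [U₂,…,U_{k+1}] D₂ Vᵀ`, where `D₁ = ⊕ᵢ √(k+1−i) I_m` and
`D₂ = ⊕ᵢ √i Oᵢ`, satisfy `A₁A₁ᵀ + A₂A₂ᵀ = p₂ I_{p₁}`,
`A₁ᵀA₁ + A₂ᵀA₂ = p₁ I_{p₂}` and `tr(A₁ᵀA₂) = 0`. -/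
theorem rank_two_core_construction
    (k m : ℕ) (hk : 0 < k) (hm : 0 < m)
    (p₁ p₂ : ℕ) (hp₁ : p₁ = (k + 1) * m) (hp₂ : p₂ = k * m)
    (U : Matrix (Fin p₁) (Fin (k + 1) × Fin m) ℝ)
    (hU₁ : U * Uᵀ = 1) (hU₂ : Uᵀ * U = 1)
    (V : Matrix (Fin k × Fin m) (Fin k × Fin m) ℝ)
    (hV₁ : V * Vᵀ = 1) (hV₂ : Vᵀ * V = 1)
    (O : Fin k → Matrix (Fin m) (Fin m) ℝ)
    (hO : ∀ i, (O i)ᵀ * O i = 1)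
    (Ulow Uhigh : Matrix (Fin p₁) (Fin k × Fin m) ℝ)
    (hUlow : ∀ a x, Ulow a x = U a (x.1.castSucc, x.2))
    (hUhigh : ∀ a x, Uhigh a x = U a (x.1.succ, x.2))
    (D₁ D₂ : Matrix (Fin k × Fin m) (Fin k × Fin m) ℝ)
    (hD₁ : ∀ x y, D₁ x y =
      if x.1 = y.1 ∧ x.2 = y.2 then Real.sqrt ((k : ℝ) - (x.1 : ℕ)) else 0)
    (hD₂ : ∀ x y, D₂ x y =
      if x.1 = y.1 then Real.sqrt ((x.1 : ℕ) + 1) * O x.1 x.2 y.2 else 0)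
    (A₁ A₂ : Matrix (Fin p₁) (Fin k × Fin m) ℝ)
    (hA₁ : A₁ = Real.sqrt m • (Ulow * D₁ * Vᵀ))
    (hA₂ : A₂ = Real.sqrt m • (Uhigh * D₂ * Vᵀ)) :
    A₁ * A₁ᵀ + A₂ * A₂ᵀ = (p₂ : ℝ) • (1 : Matrix (Fin p₁) (Fin p₁) ℝ) ∧
    A₁ᵀ * A₁ + A₂ᵀ * A₂ =
      (p₁ : ℝ) • (1 : Matrix (Fin k × Fin m) (Fin k × Fin m) ℝ) ∧
    (A₁ᵀ * A₂).trace = 0 := by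
  classical
  have sqm : Real.sqrt m * Real.sqrt m = (m : ℝ) :=
    Real.mul_self_sqrt (by positivity)
  -- D₁ is a diagonal matrix
  have hD₁' : D₁ = diagonal (fun x : Fin k × Fin m => Real.sqrt ((k : ℝ) - (x.1 : ℕ))) := by
    ext x y
    rw [hD₁, diagonal_apply]
    by_cases h : x = y
    · subst h; simp
    · have : ¬ (x.1 = y.1 ∧ x.2 = y.2) := by
        intro ⟨h1, h2⟩; exact h (Prod.ext h1 h2)
      simp [h, this]
  have hD₁t : D₁ᵀ = D₁ := by rw [hD₁', diagonal_transpose]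
  -- entrywise orthogonality facts
  have hUo : ∀ x y, (∑ a, U a x * U a y) = if x = y then (1:ℝ) else 0 := by
    intro x y
    have := congrFun (congrFun hU₂ x) y
    simpa [Matrix.mul_apply, Matrix.one_apply, transpose_apply] using this
  have hUr : ∀ a b, (∑ x, U a x * U b x) = if a = b then (1:ℝ) else 0 := by
    intro a b
    have := congrFun (congrFun hU₁ a) b
    simpa [Matrix.mul_apply, Matrix.one_apply, transpose_apply] using this
  have hOr : ∀ (i : Fin k) (a b : Fin m),
      (∑ j, O i a j * O i b j) = if a = b then (1:ℝ) else 0 := by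
    intro i a b
    have h1 : O i * (O i)ᵀ = 1 := by
      rw [mul_eq_one_comm]; exact hO i
    have := congrFun (congrFun h1 a) b
    simpa [Matrix.mul_apply, Matrix.one_apply, transpose_apply] using this
  have hkx : ∀ i : Fin k, (0:ℝ) ≤ (k : ℝ) - (i : ℕ) := by
    intro i
    have : ((i : ℕ) : ℝ) < (k : ℝ) := by exact_mod_cast i.isLt
    linarith
  have hsq2 : ∀ i : Fin k,
      Real.sqrt ((i : ℕ) + 1) * Real.sqrt ((i : ℕ) + 1) = ((i : ℕ) : ℝ) + 1 := by
    intro i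
    have := Real.mul_self_sqrt (show (0:ℝ) ≤ ((i:ℕ):ℝ) + 1 by positivity)
    simpa using this
  have hDD₁ : D₁ * D₁ᵀ = diagonal (fun x : Fin k × Fin m => (k : ℝ) - (x.1 : ℕ)) := by
    rw [hD₁t, hD₁', diagonal_mul_diagonal]
    ext x y
    rcases eq_or_ne x y with h | h
    · subst h
      rw [diagonal_apply_eq, diagonal_apply_eq]
      exact Real.mul_self_sqrt (hkx x.1)
    · rw [diagonal_apply_ne _ h, diagonal_apply_ne _ h]
  have hDD₂ : D₂ * D₂ᵀ = diagonal (fun x : Fin k × Fin m => ((x.1 : ℕ) : ℝ) + 1) := by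
    ext ⟨x1, x2⟩ ⟨y1, y2⟩
    simp only [Matrix.mul_apply, transpose_apply, hD₂, Fintype.sum_prod_type]
    by_cases h : x1 = y1
    · subst h
      rw [Finset.sum_eq_single x1]
      · simp only [if_pos rfl, if_true]
        have : (∑ j, (Real.sqrt ((x1:ℕ) + 1) * O x1 x2 j) *
              (Real.sqrt ((x1:ℕ) + 1) * O x1 y2 j)) =
            (Real.sqrt ((x1:ℕ) + 1) * Real.sqrt ((x1:ℕ) + 1)) *
              ∑ j, O x1 x2 j * O x1 y2 j := by
          rw [Finset.mul_sum]
          exact Finset.sum_congr rfl fun j _ => by ring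
        rw [this, hOr, hsq2]
        by_cases h2 : x2 = y2 <;> simp [h2, diagonal_apply, Prod.ext_iff]
      · intro i _ hi
        have h1 : ¬ x1 = i := fun hh => hi hh.symm
        simp [h1]
      · intro h'; exact absurd (Finset.mem_univ _) h'
    · rw [diagonal_apply_ne _ (by simp [Prod.ext_iff, h])]
      apply Finset.sum_eq_zero; intro i _
      apply Finset.sum_eq_zero; intro j _
      by_cases h1 : x1 = i
      · have h2 : ¬ y1 = i := fun hh => h (h1.trans hh.symm)
        simp [h2]
      · simp [h1]
  have hD₂tD₂ : D₂ᵀ * D₂ = diagonal (fun x : Fin k × Fin m => ((x.1 : ℕ) : ℝ) + 1) := by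
    ext ⟨x1, x2⟩ ⟨y1, y2⟩
    simp only [Matrix.mul_apply, transpose_apply, hD₂, Fintype.sum_prod_type]
    by_cases h : x1 = y1
    · subst h
      rw [Finset.sum_eq_single x1]
      · simp only [if_pos rfl, if_true]
        have : (∑ j, (Real.sqrt ((x1:ℕ) + 1) * O x1 j x2) *
              (Real.sqrt ((x1:ℕ) + 1) * O x1 j y2)) =
            (Real.sqrt ((x1:ℕ) + 1) * Real.sqrt ((x1:ℕ) + 1)) *
              ∑ j, O x1 j x2 * O x1 j y2 := by
          rw [Finset.mul_sum]
          exact Finset.sum_congr rfl fun j _ => by ring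
        have hcol : (∑ j, O x1 j x2 * O x1 j y2) = if x2 = y2 then (1:ℝ) else 0 := by
          have := congrFun (congrFun (hO x1) x2) y2
          simpa [Matrix.mul_apply, Matrix.one_apply, transpose_apply] using this
        rw [this, hcol, hsq2]
        by_cases h2 : x2 = y2 <;> simp [h2, diagonal_apply, Prod.ext_iff]
      · intro i _ hi
        have h1 : ¬ i = x1 := hi
        simp [h1]
      · intro h'; exact absurd (Finset.mem_univ _) h'
    · rw [diagonal_apply_ne _ (by simp [Prod.ext_iff, h])]
      apply Finset.sum_eq_zero; intro i _
      apply Finset.sum_eq_zero; intro j _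
      by_cases h1 : i = x1
      · have h2 : ¬ i = y1 := fun hh => h (h1.symm.trans hh)
        simp [h2]
      · simp [h1]
  -- rearrangements
  have hAA₁ : A₁ * A₁ᵀ = (m : ℝ) • (Ulow * (D₁ * (D₁ᵀ * Ulowᵀ))) := by
    rw [hA₁, transpose_smul, Matrix.smul_mul, Matrix.mul_smul, smul_smul, sqm]
    congr 1
    rw [transpose_mul, transpose_mul, transpose_transpose]
    simp only [Matrix.mul_assoc]
    rw [show Vᵀ * (V * (D₁ᵀ * Ulowᵀ)) = D₁ᵀ * Ulowᵀ by
      rw [← Matrix.mul_assoc, hV₂, Matrix.one_mul]]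
  have hAA₂ : A₂ * A₂ᵀ = (m : ℝ) • (Uhigh * (D₂ * (D₂ᵀ * Uhighᵀ))) := by
    rw [hA₂, transpose_smul, Matrix.smul_mul, Matrix.mul_smul, smul_smul, sqm]
    congr 1
    rw [transpose_mul, transpose_mul, transpose_transpose]
    simp only [Matrix.mul_assoc]
    rw [show Vᵀ * (V * (D₂ᵀ * Uhighᵀ)) = D₂ᵀ * Uhighᵀ by
      rw [← Matrix.mul_assoc, hV₂, Matrix.one_mul]]
  -- telescoping identity
  have tele : ∀ F : Fin (k+1) → ℝ,
      ((∑ i : Fin k, ((k:ℝ) - (i:ℕ)) * F i.castSucc) +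
        ∑ i : Fin k, (((i:ℕ):ℝ) + 1) * F i.succ) = (k:ℝ) * ∑ l, F l := by
    intro F
    have e1 : (∑ i : Fin k, ((k:ℝ) - (i:ℕ)) * F i.castSucc)
        = ∑ l : Fin (k+1), ((k:ℝ) - (l:ℕ)) * F l := by
      rw [Fin.sum_univ_castSucc]
      simp
    have e2 : (∑ i : Fin k, (((i:ℕ):ℝ) + 1) * F i.succ)
        = ∑ l : Fin (k+1), ((l:ℕ):ℝ) * F l := by
      rw [Fin.sum_univ_succ]
      simp only [Fin.val_zero, Nat.cast_zero, zero_mul, zero_add, Fin.val_succ,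
        Nat.cast_add, Nat.cast_one]
    rw [e1, e2, ← Finset.sum_add_distrib, Finset.mul_sum]
    exact Finset.sum_congr rfl fun l _ => by ring
  -- Part 1
  have part1 : A₁ * A₁ᵀ + A₂ * A₂ᵀ = (p₂ : ℝ) • (1 : Matrix (Fin p₁) (Fin p₁) ℝ) := by
    rw [hAA₁, hAA₂, ← Matrix.mul_assoc D₁, ← Matrix.mul_assoc D₂, hDD₁, hDD₂, ← smul_add]
    have key : Ulow * (diagonal (fun x : Fin k × Fin m => (k : ℝ) - (x.1 : ℕ)) * Ulowᵀ) +
        Uhigh * (diagonal (fun x : Fin k × Fin m => ((x.1 : ℕ) : ℝ) + 1) * Uhighᵀ) =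
        (k : ℝ) • (1 : Matrix (Fin p₁) (Fin p₁) ℝ) := by
      ext a b
      simp only [Matrix.add_apply, Matrix.mul_apply, transpose_apply, diagonal_apply,
        Matrix.smul_apply, smul_eq_mul, hUlow, hUhigh, ite_mul, zero_mul,
        Finset.sum_ite_eq, Finset.mem_univ, if_true]
      set F : Fin (k+1) → ℝ := fun l => ∑ j, U a (l, j) * U b (l, j) with hF
      have L1 : (∑ x : Fin k × Fin m,
            U a (x.1.castSucc, x.2) * (((k:ℝ) - (x.1:ℕ)) * U b (x.1.castSucc, x.2)))
          = ∑ i : Fin k, ((k:ℝ) - (i:ℕ)) * F i.castSucc := by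
        rw [Fintype.sum_prod_type]
        refine Finset.sum_congr rfl fun i _ => ?_
        rw [hF, Finset.mul_sum]
        exact Finset.sum_congr rfl fun j _ => by ring
      have L2 : (∑ x : Fin k × Fin m,
            U a (x.1.succ, x.2) * ((((x.1:ℕ):ℝ) + 1) * U b (x.1.succ, x.2)))
          = ∑ i : Fin k, (((i:ℕ):ℝ) + 1) * F i.succ := by
        rw [Fintype.sum_prod_type]
        refine Finset.sum_congr rfl fun i _ => ?_
        rw [hF, Finset.mul_sum]
        exact Finset.sum_congr rfl fun j _ => by ring
      rw [L1, L2, tele]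
      have : (∑ l, F l) = ∑ x : Fin (k+1) × Fin m, U a x * U b x := by
        rw [Fintype.sum_prod_type]
      rw [this, hUr, Matrix.one_apply]
    rw [key, smul_smul]
    congr 1
    rw [hp₂]
    push_cast
    ring
  -- sub-orthogonality
  have hUlowO : Ulowᵀ * Ulow = 1 := by
    ext x y
    simp only [Matrix.mul_apply, transpose_apply, hUlow]
    rw [hUo, Matrix.one_apply]
    by_cases h : x = y
    · simp [h]
    · have hne : ((x.1.castSucc : Fin (k+1)), x.2) ≠ (y.1.castSucc, y.2) := by
        intro hc
        have h1 := congrArg Prod.fst hc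
        have h2 := congrArg Prod.snd hc
        simp only at h1 h2
        exact h (Prod.ext (Fin.castSucc_inj.mp h1) h2)
      simp [h, hne]
  have hUhighO : Uhighᵀ * Uhigh = 1 := by
    ext x y
    simp only [Matrix.mul_apply, transpose_apply, hUhigh]
    rw [hUo, Matrix.one_apply]
    by_cases h : x = y
    · simp [h]
    · have hne : ((x.1.succ : Fin (k+1)), x.2) ≠ (y.1.succ, y.2) := by
        intro hc
        have h1 := congrArg Prod.fst hc
        have h2 := congrArg Prod.snd hc
        simp only at h1 h2
        exact h (Prod.ext (Fin.succ_inj.mp h1) h2)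
      simp [h, hne]
  have hAtA₁ : A₁ᵀ * A₁ = (m : ℝ) • (V * (D₁ᵀ * (D₁ * Vᵀ))) := by
    rw [hA₁, transpose_smul, Matrix.smul_mul, Matrix.mul_smul, smul_smul, sqm]
    congr 1
    rw [transpose_mul, transpose_mul, transpose_transpose]
    simp only [Matrix.mul_assoc]
    rw [show Ulowᵀ * (Ulow * (D₁ * Vᵀ)) = D₁ * Vᵀ by
      rw [← Matrix.mul_assoc, hUlowO, Matrix.one_mul]]
  have hAtA₂ : A₂ᵀ * A₂ = (m : ℝ) • (V * (D₂ᵀ * (D₂ * Vᵀ))) := by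
    rw [hA₂, transpose_smul, Matrix.smul_mul, Matrix.mul_smul, smul_smul, sqm]
    congr 1
    rw [transpose_mul, transpose_mul, transpose_transpose]
    simp only [Matrix.mul_assoc]
    rw [show Uhighᵀ * (Uhigh * (D₂ * Vᵀ)) = D₂ * Vᵀ by
      rw [← Matrix.mul_assoc, hUhighO, Matrix.one_mul]]
  have hD₁tD₁ : D₁ᵀ * D₁ = diagonal (fun x : Fin k × Fin m => (k : ℝ) - (x.1 : ℕ)) := by
    rw [hD₁t]
    rw [hD₁t] at hDD₁
    exact hDD₁
  have part2 : A₁ᵀ * A₁ + A₂ᵀ * A₂ =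
      (p₁ : ℝ) • (1 : Matrix (Fin k × Fin m) (Fin k × Fin m) ℝ) := by
    rw [hAtA₁, hAtA₂, ← Matrix.mul_assoc D₁ᵀ, ← Matrix.mul_assoc D₂ᵀ, hD₁tD₁, hD₂tD₂,
        ← smul_add]
    have hdiagsum : V * (diagonal (fun x : Fin k × Fin m => (k : ℝ) - (x.1 : ℕ)) * Vᵀ) +
        V * (diagonal (fun x : Fin k × Fin m => ((x.1 : ℕ) : ℝ) + 1) * Vᵀ) =
        ((k : ℝ) + 1) • (1 : Matrix (Fin k × Fin m) (Fin k × Fin m) ℝ) := by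
      rw [← Matrix.mul_add, ← Matrix.add_mul, diagonal_add]
      have : (diagonal fun x : Fin k × Fin m => ((k : ℝ) - (x.1 : ℕ)) + (((x.1 : ℕ) : ℝ) + 1)) =
          ((k : ℝ) + 1) • (1 : Matrix (Fin k × Fin m) (Fin k × Fin m) ℝ) := by
        ext x y
        by_cases h : x = y <;> simp [diagonal_apply, Matrix.one_apply, h]
        ring
      rw [this, Matrix.smul_mul, Matrix.mul_smul, Matrix.one_mul, hV₁]
    rw [hdiagsum, smul_smul]
    congr 1
    rw [hp₁]
    push_cast
    ring
  -- Part 3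
  have part3 : (A₁ᵀ * A₂).trace = 0 := by
    have hform : A₁ᵀ * A₂ =
        (m : ℝ) • (V * (D₁ᵀ * (Ulowᵀ * (Uhigh * (D₂ * Vᵀ))))) := by
      rw [hA₁, hA₂, transpose_smul, Matrix.smul_mul, Matrix.mul_smul, smul_smul, sqm]
      congr 1
      rw [transpose_mul, transpose_mul, transpose_transpose]
      simp only [Matrix.mul_assoc]
    rw [hform, Matrix.trace_smul]
    have hcyc : (V * (D₁ᵀ * (Ulowᵀ * (Uhigh * (D₂ * Vᵀ))))).trace =
        (D₁ᵀ * (Ulowᵀ * (Uhigh * D₂))).trace := by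
      rw [Matrix.trace_mul_comm]
      congr 1
      simp only [Matrix.mul_assoc]
      rw [show Vᵀ * V = 1 from hV₂, Matrix.mul_one]
    rw [hcyc]
    have hzero : (D₁ᵀ * (Ulowᵀ * (Uhigh * D₂))).trace = 0 := by
      rw [hD₁t]
      set N := Ulowᵀ * (Uhigh * D₂) with hN
      have hNx : ∀ x : Fin k × Fin m, N x x = 0 := by
        intro x
        rw [hN, ← Matrix.mul_assoc, Matrix.mul_apply]
        apply Finset.sum_eq_zero
        intro z _
        by_cases hz : z.1 = x.1
        · have hM : (Ulowᵀ * Uhigh) x z = 0 := by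
            rw [Matrix.mul_apply]
            simp only [transpose_apply, hUlow, hUhigh]
            rw [hUo]
            have hne : ((x.1.castSucc : Fin (k+1)), x.2) ≠ (z.1.succ, z.2) := by
              intro hc
              have h1 := congrArg (fun p => (Prod.fst p : Fin (k+1)).val) hc
              simp only [Fin.coe_castSucc, Fin.val_succ] at h1
              have h2 := congrArg Fin.val hz
              omega
            simp [hne]
          rw [hM, zero_mul]
        · rw [hD₂ z x, if_neg hz, mul_zero]
      show (∑ x, (D₁ * N) x x) = 0
      apply Finset.sum_eq_zero
      intro x _
      rw [Matrix.mul_apply]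
      apply Finset.sum_eq_zero
      intro y _
      by_cases hxy : x.1 = y.1 ∧ x.2 = y.2
      · have hyx : y = x := (Prod.ext hxy.1 hxy.2).symm
        rw [hyx, hNx, mul_zero]
      · rw [hD₁ x y, if_neg hxy, zero_mul]
    rw [hzero, smul_zero]
  exact ⟨part1, part2, part3⟩
end

section
/- Let X₁, X₂ ∈ ℝ^{2×2} satisfy (1/2)(vec(X₁)vec(X₁)ᵀ + vec(X₂)vec(X₂)ᵀ) = C where C is the 4×4 matrix with C₁₁=C₂₂=C₃₃=C₄₄=1, C₁₄=C₄₁=1, C₂₃=C₃₂=−1, and all other entries 0. Then there exist θ ∈ ℝ and a sign ε ∈ {+1,−1} such that X₁ = √2·[[cos θ, ε sin θ],[−ε sin θ, cos θ]] and X₂ = √2·[[sin θ, −ε cos θ],[ε cos θ, sin θ]]. -/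
/-!
Write `u k = (vec X₁ k, vec X₂ k) ∈ ℝ²`, so that `C` is the Gram matrix `(u i ⬝ u j) / 2`.
The entries `C₁₁ = C₄₄ = C₁₄ = 1` are the equality case of Cauchy–Schwarz and force `u 4 = u 1`;
likewise `C₂₂ = C₃₃ = -C₂₃ = 1` forces `u 3 = -u 2`. Finally `u 1` has norm `√2`, so
`u 1 = √2 (cos θ, sin θ)`, and `u 2` is a vector of the same norm orthogonal to it (`C₁₂ = 0`),
so `u 2 = ε √2 (-sin θ, cos θ)` with `ε = ±1`.
-/

open Matrix

/-- Column-major vectorization of a `2×2` real matrix. -/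
def vec4 (X : Matrix (Fin 2) (Fin 2) ℝ) : Fin 4 → ℝ :=
  ![X 0 0, X 1 0, X 0 1, X 1 1]

lemma exists_eq_mul_cos_and_eq_mul_sin {x y r : ℝ} (hr : 0 ≤ r) (h : x * x + y * y = r * r) :
    ∃ θ : ℝ, x = r * Real.cos θ ∧ y = r * Real.sin θ := by
  have hnorm : ‖(⟨x, y⟩ : ℂ)‖ = r := by
    rw [Complex.norm_def, Complex.normSq_mk, h, Real.sqrt_mul_self hr]
  refine ⟨Complex.arg ⟨x, y⟩, ?_, ?_⟩
  · rw [← hnorm, Complex.norm_mul_cos_arg]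
  · rw [← hnorm, Complex.norm_mul_sin_arg]

lemma exists_sign_of_mul_cos_add_mul_sin_eq_zero {x y r θ : ℝ}
    (h : x * x + y * y = r * r) (horth : x * Real.cos θ + y * Real.sin θ = 0) :
    ∃ ε : ℝ, (ε = 1 ∨ ε = -1) ∧ x = -ε * r * Real.sin θ ∧ y = ε * r * Real.cos θ := by
  set t := y * Real.cos θ - x * Real.sin θ
  have hx : x = -t * Real.sin θ := by
    linear_combination Real.cos θ * horth - x * Real.sin_sq_add_cos_sq θ
  have hy : y = t * Real.cos θ := by
    linear_combination Real.sin θ * horth - y * Real.sin_sq_add_cos_sq θ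
  have ht : t * t = r * r := by
    rw [← h, hx, hy]
    linear_combination (-t * t) * Real.sin_sq_add_cos_sq θ
  rcases mul_self_eq_mul_self_iff.mp ht with ht | ht
  · exact ⟨1, .inl rfl, by rw [hx, ht]; ring, by rw [hy, ht]; ring⟩
  · exact ⟨-1, .inr rfl, by rw [hx, ht]; ring, by rw [hy, ht]; ring⟩

lemma eq_of_mul_self_add_mul_self_eq_of_mul_add_mul_eq {x y z w r : ℝ}
    (hxy : x * x + y * y = r) (hzw : z * z + w * w = r) (h : x * z + y * w = r) :
    z = x ∧ w = y := by
  have : (z - x) * (z - x) + (w - y) * (w - y) = 0 := by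
    linear_combination hxy + hzw - 2 * h
  obtain ⟨h₁, h₂⟩ := mul_self_add_mul_self_eq_zero.mp this
  exact ⟨sub_eq_zero.mp h₁, sub_eq_zero.mp h₂⟩

/-- if the sample covariance of `vec(X₁), vec(X₂)` equals the matrix
`C` below, then `X₁, X₂` belong to the stated one-parameter family, up to a sign. -/
theorem fiber_characterization
    (X₁ X₂ : Matrix (Fin 2) (Fin 2) ℝ)
    (h : (1 / 2 : ℝ) • (vecMulVec (vec4 X₁) (vec4 X₁) + vecMulVec (vec4 X₂) (vec4 X₂))
      = !![1, 0, 0, 1; 0, 1, -1, 0; 0, -1, 1, 0; 1, 0, 0, 1]) :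
    ∃ θ ε : ℝ, (ε = 1 ∨ ε = -1) ∧
      X₁ = Real.sqrt 2 •
        !![Real.cos θ, ε * Real.sin θ; -ε * Real.sin θ, Real.cos θ] ∧
      X₂ = Real.sqrt 2 •
        !![Real.sin θ, -ε * Real.cos θ; ε * Real.cos θ, Real.sin θ] := by
  have hC (i j : Fin 4) : vec4 X₁ i * vec4 X₁ j + vec4 X₂ i * vec4 X₂ j =
      2 * !![1, 0, 0, 1; 0, 1, -1, 0; 0, -1, 1, 0; 1, 0, 0, 1] i j := by
    rw [← h]
    simp only [Matrix.smul_apply, Matrix.add_apply, vecMulVec_apply, smul_eq_mul]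
    ring
  have h00 := hC 0 0; have h11 := hC 1 1; have h22 := hC 2 2; have h33 := hC 3 3
  have h03 := hC 0 3; have h12 := hC 1 2; have h01 := hC 0 1
  simp only [vec4, Fin.isValue, cons_val_zero, of_apply, cons_val', cons_val_fin_one, mul_one,
    cons_val_one, cons_val, mul_neg, mul_zero] at h00 h11 h22 h33 h03 h12 h01
  obtain ⟨hd₁, hd₂⟩ := eq_of_mul_self_add_mul_self_eq_of_mul_add_mul_eq h00 h33 h03
  obtain ⟨hc₁, hc₂⟩ := eq_of_mul_self_add_mul_self_eq_of_mul_add_mul_eq (z := -X₁ 0 1)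
    (w := -X₂ 0 1) h11 (by linear_combination h22) (by linear_combination -h12)
  have h2 : (2 : ℝ) = √2 * √2 := (Real.mul_self_sqrt zero_le_two).symm
  obtain ⟨θ, ha₁, ha₂⟩ := exists_eq_mul_cos_and_eq_mul_sin (Real.sqrt_nonneg 2) (h00.trans h2)
  have horth : X₁ 1 0 * Real.cos θ + X₂ 1 0 * Real.sin θ = 0 := by
    refine mul_left_cancel₀ (Real.sqrt_ne_zero'.mpr two_pos) ?_
    rw [mul_zero, ← h01, ha₁, ha₂]
    ring
  obtain ⟨ε, hε, hb₁, hb₂⟩ := exists_sign_of_mul_cos_add_mul_sin_eq_zero (h11.trans h2) horth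
  refine ⟨θ, ε, hε, ?_, ?_⟩ <;> ext i j <;> fin_cases i <;> fin_cases j <;>
    simp [ha₁, ha₂, hb₁, hb₂, hd₁, hd₂, neg_eq_iff_eq_neg.mp hc₁, neg_eq_iff_eq_neg.mp hc₂] <;>
    ring
end
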